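/- Let d ≥ 1, let A be a d×d complex matrix with operator norm strictly less than 1, let b ∈ ℂ^d, set φ(z) = Az + b, and assume that C_φ is cyclic on F(ℂ^d). Then the set of cyclic vectors of C_φ, together with 0, does not contain a two-dimensional subspace: for any linearly independent f, g ∈ F(ℂ^d) there exist a, b' ∈ ℂ, not both zero, such that a·f + b'·g is not a cyclic vector for C_φ. -/

import Mathlib

open MeasureTheory

noncomputable section

def eNormSq (d : ℕ) (z : Fin d → ℂ) : ℝ := ∑ j, Complex.normSq (z j)

def eNorm (d : ℕ) (z : Fin d → ℂ) : ℝ := Real.sqrt (eNormSq d z)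

def eInner (d : ℕ) (z w : Fin d → ℂ) : ℂ := ∑ j, z j * (starRingEnd ℂ) (w j)

def fockIntegrand (d : ℕ) (f : (Fin d → ℂ) → ℂ) (z : Fin d → ℂ) : ℝ :=
  ‖f z‖ ^ 2 * Real.exp (-(eNormSq d z) / 2)

def MemFock (d : ℕ) (f : (Fin d → ℂ) → ℂ) : Prop :=
  Differentiable ℂ f ∧ Integrable (fockIntegrand d f)

def fockNorm (d : ℕ) (f : (Fin d → ℂ) → ℂ) : ℝ :=
  Real.sqrt (((2 * Real.pi) ^ d)⁻¹ * ∫ z, fockIntegrand d f z)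

def BddHyp (d : ℕ) (A : Matrix (Fin d) (Fin d) ℂ) (b : Fin d → ℂ) : Prop :=
  (∀ v, eNorm d (A.mulVec v) ≤ eNorm d v) ∧
  (∀ v, eNorm d (A.mulVec v) = eNorm d v → eInner d (A.mulVec v) b = 0)

def affMap (d : ℕ) (A : Matrix (Fin d) (Fin d) ℂ) (b : Fin d → ℂ) : (Fin d → ℂ) → (Fin d → ℂ) :=
  fun z => A.mulVec z + b

def IsCyclicVector (d : ℕ) (A : Matrix (Fin d) (Fin d) ℂ) (b : Fin d → ℂ)
    (h : (Fin d → ℂ) → ℂ) : Prop :=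
  MemFock d h ∧ ∀ g : (Fin d → ℂ) → ℂ, MemFock d g → ∀ ε : ℝ, 0 < ε →
    ∃ (m : ℕ) (c : ℕ → ℂ),
      fockNorm d (fun z => g z - ∑ n ∈ Finset.range (m + 1), c n * h ((affMap d A b)^[n] z)) < ε

def IsCyclicOp (d : ℕ) (A : Matrix (Fin d) (Fin d) ℂ) (b : Fin d → ℂ) : Prop :=
  ∃ h, IsCyclicVector d A b h


open Metric Real Set

/-! Since `‖A‖ < 1`, the map `φ = affMap d A b` has a fixed point `z₀`, so every `h ∘ φ^[n]`
takes the value `h z₀` at `z₀`. For any `f, g` some nontrivial combination `h = a f + b' g`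
vanishes at `z₀`, hence so does every combination of the `h ∘ φ^[n]`. Point evaluation at `z₀`
is bounded on the Fock space (sub-mean-value property of `|F|²` on polydiscs against the Gaussian
weight), so the constant `1` stays at a positive distance from all these combinations.
The same pointwise bound, applied at `φ z`, shows that `f ↦ f ∘ φ` preserves the Fock space,
which is needed for the Fock norms of those combinations to be the genuine ones. -/

theorem Continuous.integrableOn_ball {X G : Type*} [PseudoMetricSpace X] [ProperSpace X]
    [MeasurableSpace X] [OpensMeasurableSpace X] {μ : Measure X} [IsFiniteMeasureOnCompacts μ]
    [NormedAddCommGroup G] {f : X → G} (hf : Continuous f) (x : X) (r : ℝ) :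
    IntegrableOn f (ball x r) μ :=
  (hf.continuousOn.integrableOn_compact' (isCompact_closedBall x r)
    measurableSet_closedBall).mono_set ball_subset_closedBall

section MeanValue

variable {E : Type*} [NormedAddCommGroup E] [NormedSpace ℂ E] [CompleteSpace E]

theorem norm_le_circleAverage_norm {f : ℂ → E} (hf : Differentiable ℂ f) (c : ℂ) (R : ℝ) :
    ‖f c‖ ≤ circleAverage (fun z => ‖f z‖) c R := by
  calc ‖f c‖ = ‖circleAverage f c R‖ := by rw [hf.diffContOnCl.circleAverage]
    _ ≤ circleAverage (fun z => ‖f z‖) c R := by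
      rw [circleAverage_def, circleAverage_def, norm_smul, smul_eq_mul,
        Real.norm_of_nonneg (by positivity)]
      gcongr
      exact intervalIntegral.norm_integral_le_integral_norm (by positivity)

theorem circleAverage_eq_setIntegral_Ioo (g : ℂ → ℝ) (c : ℂ) (r : ℝ) :
    circleAverage g c r = (2 * π)⁻¹ * ∫ θ in Ioo (-π) π, g (circleMap c r θ) := by
  rw [circleAverage_eq_integral_add (-π), smul_eq_mul,
    intervalIntegral.integral_comp_add_right (fun θ => g (circleMap c r θ)),
    intervalIntegral.integral_of_le (by linarith [pi_pos]), integral_Ioc_eq_integral_Ioo]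
  ring_nf

theorem setIntegral_ball_eq_integral_circleAverage {g : ℂ → ℝ} (hg : Continuous g) (c : ℂ)
    {R : ℝ} (hR : 0 ≤ R) :
    ∫ z in ball c R, g z = ∫ r in (0)..R, 2 * π * r * circleAverage g c r := by
  set F : ℝ × ℝ → ℝ := fun p => p.1 * g (circleMap c p.1 p.2)
  have hF : Continuous F := by unfold F; fun_prop
  have hpolar : ∀ p ∈ polarCoord.target,
      p.1 • (ball c R).indicator g (c + Complex.polarCoord.symm p) =
        (Ioo 0 R ×ˢ Ioo (-π) π).indicator F p := by
    rintro ⟨r, θ⟩ hp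
    obtain ⟨hr, hθ⟩ : 0 < r ∧ θ ∈ Ioo (-π) π := by rwa [polarCoord_target] at hp
    have hc : c + Complex.polarCoord.symm (r, θ) = circleMap c r θ := by
      rw [Complex.polarCoord_symm_apply, circleMap, Complex.exp_mul_I]; push_cast; ring
    have hmem : circleMap c r θ ∈ ball c R ↔ r < R := by
      rw [mem_ball, dist_eq_norm, circleMap_sub_center, norm_circleMap_zero, abs_of_pos hr]
    by_cases h : r < R
    · rw [hc, indicator_of_mem (hmem.2 h),
        indicator_of_mem (show (r, θ) ∈ Ioo 0 R ×ˢ Ioo (-π) π from ⟨⟨hr, h⟩, hθ⟩)]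
      rfl
    · rw [hc, indicator_of_notMem (mt hmem.1 h), indicator_of_notMem (fun hp => h hp.1.2),
        smul_zero]
  have hint : IntegrableOn F (Ioo 0 R ×ˢ Ioo (-π) π) :=
    (hF.continuousOn.integrableOn_compact (isCompact_Icc.prod isCompact_Icc)).mono_set
      (prod_mono Ioo_subset_Icc_self Ioo_subset_Icc_self)
  calc ∫ z in ball c R, g z
      = ∫ z, (ball c R).indicator g (c + z) := by
        rw [integral_add_left_eq_self, integral_indicator measurableSet_ball]
    _ = ∫ p in Ioo 0 R ×ˢ Ioo (-π) π, F p := by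
        rw [← Complex.integral_comp_polarCoord_symm, setIntegral_congr_fun
          polarCoord.open_target.measurableSet hpolar,
          setIntegral_indicator (measurableSet_Ioo.prod measurableSet_Ioo),
          inter_eq_self_of_subset_right]
        rw [polarCoord_target]
        exact prod_mono Ioo_subset_Ioi_self subset_rfl
    _ = ∫ r in Ioo 0 R, ∫ θ in Ioo (-π) π, F (r, θ) := setIntegral_prod F hint
    _ = ∫ r in (0)..R, 2 * π * r * circleAverage g c r := by
        rw [intervalIntegral.integral_of_le hR, integral_Ioc_eq_integral_Ioo]
        refine setIntegral_congr_fun measurableSet_Ioo fun r _ => ?_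
        simp only [F]
        rw [integral_const_mul, circleAverage_eq_setIntegral_Ioo]
        field_simp

theorem norm_mul_volume_le_setIntegral_ball {f : ℂ → E} (hf : Differentiable ℂ f) (c : ℂ)
    {R : ℝ} (hR : 0 ≤ R) : ‖f c‖ * (π * R ^ 2) ≤ ∫ z in ball c R, ‖f z‖ := by
  have hcont : Continuous fun z => ‖f z‖ := hf.continuous.norm
  rw [setIntegral_ball_eq_integral_circleAverage hcont c hR]
  calc ‖f c‖ * (π * R ^ 2) = ∫ r in (0)..R, 2 * π * r * ‖f c‖ := by
        rw [intervalIntegral.integral_mul_const, intervalIntegral.integral_const_mul, integral_id]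
        ring
    _ ≤ ∫ r in (0)..R, 2 * π * r * circleAverage (fun z => ‖f z‖) c r := by
        refine intervalIntegral.integral_mono_on hR
          ((by fun_prop : Continuous fun r => 2 * π * r * ‖f c‖).intervalIntegrable _ _)
          (((by fun_prop : Continuous fun r => 2 * π * r).mul
            (hcont.circleAverage (c := c))).intervalIntegrable _ _) fun r hr => ?_
        have : 0 ≤ 2 * π * r := by have := hr.1; positivity
        exact mul_le_mul_of_nonneg_left (norm_le_circleAverage_norm hf c r) this

theorem setIntegral_ball_fin_succ {d : ℕ} {H : (Fin (d + 1) → ℂ) → ℝ} (hH : Continuous H)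
    (w : Fin (d + 1) → ℂ) {R : ℝ} (hR : 0 < R) :
    ∫ z in ball w R, H z =
      ∫ x in ball (w 0) R, ∫ y in ball (Fin.tail w) R, H (Fin.cons x y) := by
  have hpre : (MeasurableEquiv.piFinSuccAbove (fun _ => ℂ) 0).symm ⁻¹' ball w R =
      ball (w 0) R ×ˢ ball (Fin.tail w) R := by
    ext ⟨x, y⟩
    simp [MeasurableEquiv.piFinSuccAbove_symm_apply, Fin.insertNthEquiv, dist_pi_lt_iff hR,
      Fin.forall_fin_succ, Fin.tail]
  have hcont : Continuous fun p : ℂ × (Fin d → ℂ) => H (Fin.cons p.1 p.2) :=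
    hH.comp (continuous_fst.finCons (A := fun _ => ℂ) continuous_snd)
  rw [← ((volume_preserving_piFinSuccAbove (fun _ => ℂ) 0).symm).setIntegral_preimage_emb
    (MeasurableEquiv.measurableEmbedding _), hpre]
  refine (setIntegral_congr_fun (measurableSet_ball.prod measurableSet_ball) fun p _ => ?_).trans
    (setIntegral_prod _ (ball_prod_same (w 0) (Fin.tail w) R ▸ hcont.integrableOn_ball _ R))
  simp [MeasurableEquiv.piFinSuccAbove_symm_apply, Fin.insertNthEquiv]

theorem norm_mul_volume_le_setIntegral_ball_pi {d : ℕ} {F : (Fin d → ℂ) → E}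
    (hF : Differentiable ℂ F) (w : Fin d → ℂ) {R : ℝ} (hR : 0 < R) :
    ‖F w‖ * (π * R ^ 2) ^ d ≤ ∫ z in ball w R, ‖F z‖ := by
  induction d with
  | zero =>
    have hball : ball w R = univ := eq_univ_of_forall fun z => by
      simp [Subsingleton.elim z w, hR]
    simp [hball, Subsingleton.elim _ w, measureReal_def, volume_pi]
  | succ d ih =>
    have hH : Continuous fun p : ℂ × (Fin d → ℂ) => ‖F (Fin.cons p.1 p.2)‖ :=
      (hF.continuous.comp (continuous_fst.finCons (A := fun _ => ℂ) continuous_snd)).norm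
    have hslice : ∀ x, Differentiable ℂ fun y : Fin d → ℂ => F (Fin.cons x y) := fun x =>
      hF.comp ((differentiable_const x).finCons (F' := fun _ => ℂ) differentiable_id)
    calc ‖F w‖ * (π * R ^ 2) ^ (d + 1)
        = ‖F (Fin.cons (w 0) (Fin.tail w))‖ * (π * R ^ 2) * (π * R ^ 2) ^ d := by
          rw [Fin.cons_self_tail, pow_succ, mul_assoc, mul_comm (π * R ^ 2)]
      _ ≤ (∫ x in ball (w 0) R, ‖F (Fin.cons x (Fin.tail w))‖) * (π * R ^ 2) ^ d := by
          gcongr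
          exact norm_mul_volume_le_setIntegral_ball
            (hF.comp (differentiable_id.finCons (F' := fun _ => ℂ) (differentiable_const _)))
            _ hR.le
      _ = ∫ x in ball (w 0) R, ‖F (Fin.cons x (Fin.tail w))‖ * (π * R ^ 2) ^ d :=
          (integral_mul_const _ _).symm
      _ ≤ ∫ x in ball (w 0) R, ∫ y in ball (Fin.tail w) R, ‖F (Fin.cons x y)‖ := by
          refine setIntegral_mono_on ?_ ?_ measurableSet_ball fun x _ =>
            ih (hslice x) (Fin.tail w)
          · exact ((hH.comp (continuous_id.prodMk continuous_const)).mul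
              continuous_const).integrableOn_ball _ R
          · have := ball_prod_same (w 0) (Fin.tail w) R ▸
              hH.integrableOn_ball (μ := volume) _ R
            rw [IntegrableOn, Measure.volume_eq_prod, ← Measure.prod_restrict] at this
            exact this.integral_prod_left
      _ = ∫ z in ball w R, ‖F z‖ := (setIntegral_ball_fin_succ hF.continuous.norm w hR).symm

end MeanValue

theorem eNormSq_nonneg (d : ℕ) (z : Fin d → ℂ) : 0 ≤ eNormSq d z :=
  Finset.sum_nonneg fun _ _ => Complex.normSq_nonneg _

theorem eNorm_nonneg (d : ℕ) (z : Fin d → ℂ) : 0 ≤ eNorm d z := sqrt_nonneg _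

theorem eNorm_sq (d : ℕ) (z : Fin d → ℂ) : eNorm d z ^ 2 = eNormSq d z :=
  sq_sqrt (eNormSq_nonneg d z)

theorem eNorm_eq_norm_toLp (d : ℕ) (z : Fin d → ℂ) : eNorm d z = ‖WithLp.toLp 2 z‖ := by
  simp [eNorm, eNormSq, EuclideanSpace.norm_eq, Complex.normSq_eq_norm_sq]

theorem eNorm_add_le (d : ℕ) (u v : Fin d → ℂ) : eNorm d (u + v) ≤ eNorm d u + eNorm d v := by
  simpa only [eNorm_eq_norm_toLp, WithLp.toLp_add] using norm_add_le _ _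

theorem eNorm_eq_zero {d : ℕ} {z : Fin d → ℂ} : eNorm d z = 0 ↔ z = 0 := by
  rw [eNorm_eq_norm_toLp, norm_eq_zero, WithLp.toLp_eq_zero]

theorem eNormSq_le_of_mem_ball {d : ℕ} {w z : Fin d → ℂ} {R : ℝ} (hz : z ∈ ball w R) :
    eNormSq d z ≤ (1 + R) * eNormSq d w + d * (R + R ^ 2) := by
  have hR : 0 < R := pos_of_mem_ball hz
  have hcoord : ∀ j, Complex.normSq (z j) ≤ (1 + R) * Complex.normSq (w j) + (R + R ^ 2) := by
    intro j
    have hzj : ‖z j‖ ≤ ‖w j‖ + R := by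
      have := (dist_le_pi_dist z w j).trans (mem_ball.1 hz).le
      rw [Complex.dist_eq] at this
      linarith [norm_le_norm_add_norm_sub' (z j) (w j)]
    simp only [Complex.normSq_eq_norm_sq]
    nlinarith [sq_nonneg (‖w j‖ - 1), norm_nonneg (z j)]
  calc eNormSq d z ≤ ∑ j, ((1 + R) * Complex.normSq (w j) + (R + R ^ 2)) :=
        Finset.sum_le_sum fun j _ => hcoord j
    _ = (1 + R) * eNormSq d w + d * (R + R ^ 2) := by
        simp [eNormSq, Finset.sum_add_distrib, Finset.mul_sum, mul_add]

theorem integrable_exp_neg_mul_eNormSq (d : ℕ) {δ : ℝ} (hδ : 0 < δ) :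
    Integrable fun z : Fin d → ℂ => exp (-δ * eNormSq d z) := by
  have hℂ : Integrable fun x : ℂ => exp (-δ * Complex.normSq x) := by
    have hprod : Integrable fun p : ℝ × ℝ => exp (-δ * p.1 ^ 2) * exp (-δ * p.2 ^ 2) :=
      (integrable_exp_neg_mul_sq hδ).mul_prod (integrable_exp_neg_mul_sq hδ)
    refine ((Complex.volume_preserving_equiv_real_prod.integrable_comp_emb
      Complex.measurableEquivRealProd.measurableEmbedding).2 hprod).congr
      (Filter.Eventually.of_forall fun x => ?_)
    simp only [Function.comp, Complex.measurableEquivRealProd_apply, ← exp_add,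
      Complex.normSq_apply]
    ring_nf
  refine (Integrable.fintype_prod (ι := Fin d) fun _ => hℂ).congr
    (Filter.Eventually.of_forall fun z => ?_)
  simp only [eNormSq, Finset.mul_sum, neg_mul, exp_sum]

theorem fockIntegrand_nonneg (d : ℕ) (f : (Fin d → ℂ) → ℂ) (z : Fin d → ℂ) :
    0 ≤ fockIntegrand d f z :=
  mul_nonneg (sq_nonneg _) (exp_pos _).le

theorem fockNorm_nonneg (d : ℕ) (f : (Fin d → ℂ) → ℂ) : 0 ≤ fockNorm d f := sqrt_nonneg _

theorem Continuous.fockIntegrand {d : ℕ} {f : (Fin d → ℂ) → ℂ} (hf : Continuous f) :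
    Continuous (fockIntegrand d f) := by
  unfold _root_.fockIntegrand eNormSq
  fun_prop

theorem fockIntegrand_add_le {d : ℕ} (f g : (Fin d → ℂ) → ℂ) (z : Fin d → ℂ) :
    fockIntegrand d (f + g) z ≤ 2 * fockIntegrand d f z + 2 * fockIntegrand d g z := by
  have hsq : ‖f z + g z‖ ^ 2 ≤ 2 * ‖f z‖ ^ 2 + 2 * ‖g z‖ ^ 2 := by
    nlinarith [norm_add_le (f z) (g z), sq_nonneg (‖f z‖ - ‖g z‖), norm_nonneg (f z + g z)]
  simp only [fockIntegrand, Pi.add_apply]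
  nlinarith [exp_pos (-eNormSq d z / 2)]

theorem memFock_const (d : ℕ) (c : ℂ) : MemFock d fun _ => c := by
  refine ⟨differentiable_const c, ((integrable_exp_neg_mul_eNormSq d one_half_pos).const_mul
    (‖c‖ ^ 2)).congr (Filter.Eventually.of_forall fun z => ?_)⟩
  simp only [fockIntegrand]
  ring_nf

def fockSpace (d : ℕ) : Submodule ℂ ((Fin d → ℂ) → ℂ) where
  carrier := {f | MemFock d f}
  zero_mem' := memFock_const d 0
  add_mem' {f g} hf hg := by
    refine ⟨hf.1.add hg.1, ((hf.2.const_mul 2).add (hg.2.const_mul 2)).mono'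
      (hf.1.add hg.1).continuous.fockIntegrand.aestronglyMeasurable
      (Filter.Eventually.of_forall fun z => ?_)⟩
    rw [Real.norm_of_nonneg (fockIntegrand_nonneg d _ z)]
    exact fockIntegrand_add_le f g z
  smul_mem' c f hf := by
    refine ⟨hf.1.const_smul c, (hf.2.const_mul (‖c‖ ^ 2)).congr
      (Filter.Eventually.of_forall fun z => ?_)⟩
    simp only [fockIntegrand, Pi.smul_apply, smul_eq_mul, norm_mul]
    ring

theorem mem_fockSpace {d : ℕ} {f : (Fin d → ℂ) → ℂ} : f ∈ fockSpace d ↔ MemFock d f := Iff.rfl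

theorem norm_sq_le_integral_fockIntegrand {d : ℕ} {f : (Fin d → ℂ) → ℂ} (hf : MemFock d f)
    {R : ℝ} (hR : 0 < R) (w : Fin d → ℂ) :
    ‖f w‖ ^ 2 ≤ ((π * R ^ 2) ^ d)⁻¹ * exp (((1 + R) * eNormSq d w + d * (R + R ^ 2)) / 2) *
      ∫ z, fockIntegrand d f z := by
  set B := ((1 + R) * eNormSq d w + d * (R + R ^ 2)) / 2 with hB
  have hweight : ∀ z ∈ ball w R, ‖f z‖ ^ 2 ≤ exp B * fockIntegrand d f z := fun z hz => by
    rw [fockIntegrand, ← mul_assoc, mul_comm (exp B), mul_assoc, ← exp_add]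
    refine le_mul_of_one_le_right (sq_nonneg _) (one_le_exp ?_)
    linarith [eNormSq_le_of_mem_ball hz, hB]
  have hmean : ‖f w‖ ^ 2 * (π * R ^ 2) ^ d ≤ ∫ z in ball w R, ‖f z‖ ^ 2 := by
    simpa only [Pi.pow_apply, norm_pow] using
      norm_mul_volume_le_setIntegral_ball_pi (hf.1.pow 2) w hR
  rw [mul_assoc, inv_mul_eq_div, le_div_iff₀ (by positivity)]
  calc ‖f w‖ ^ 2 * (π * R ^ 2) ^ d ≤ ∫ z in ball w R, ‖f z‖ ^ 2 := hmean
    _ ≤ ∫ z in ball w R, exp B * fockIntegrand d f z :=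
        setIntegral_mono_on ((hf.1.continuous.norm.pow 2).integrableOn_ball w R)
          (hf.2.const_mul _).integrableOn measurableSet_ball hweight
    _ ≤ exp B * ∫ z, fockIntegrand d f z := by
        rw [integral_const_mul]
        exact mul_le_mul_of_nonneg_left (setIntegral_le_integral hf.2
          (Filter.Eventually.of_forall (fockIntegrand_nonneg d f))) (exp_pos B).le

theorem exists_norm_le_mul_fockNorm (d : ℕ) (w : Fin d → ℂ) :
    ∃ C, 0 < C ∧ ∀ f, MemFock d f → ‖f w‖ ≤ C * fockNorm d f := by
  set K := ((π * 1 ^ 2) ^ d)⁻¹ * exp (((1 + 1) * eNormSq d w + d * (1 + 1 ^ 2)) / 2)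
  refine ⟨sqrt (K * (2 * π) ^ d), sqrt_pos.2 (by positivity), fun f hf => ?_⟩
  have hI : ∫ z, fockIntegrand d f z = (2 * π) ^ d * fockNorm d f ^ 2 := by
    rw [fockNorm, sq_sqrt (mul_nonneg (by positivity)
      (integral_nonneg (fockIntegrand_nonneg d f))), ← mul_assoc, mul_inv_cancel₀ (by positivity),
      one_mul]
  have := norm_sq_le_integral_fockIntegrand hf one_pos w
  rw [hI, ← mul_assoc] at this
  calc ‖f w‖ = sqrt (‖f w‖ ^ 2) := (sqrt_sq (norm_nonneg _)).symm
    _ ≤ sqrt (K * (2 * π) ^ d * fockNorm d f ^ 2) := sqrt_le_sqrt this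
    _ = sqrt (K * (2 * π) ^ d) * fockNorm d f := by
        rw [sqrt_mul (by positivity), sqrt_sq (fockNorm_nonneg d f)]

theorem exists_mul_sq_add_le {s : ℝ} (hs : s ^ 2 < 1) (β : ℝ) :
    ∃ ρ > 0, ∃ M, ∀ t, (1 + ρ) * (s * t + β) ^ 2 ≤ (1 - ρ) * t ^ 2 + M := by
  set ρ := (1 - s ^ 2) / 4 with hρ
  have hρ0 : 0 < ρ := by rw [hρ]; linarith
  refine ⟨ρ, hρ0, (1 + ρ) ^ 2 * β ^ 2 / ρ, fun t => ?_⟩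
  have hcoef : (1 + ρ) ^ 2 * s ^ 2 ≤ 1 - ρ := by
    rw [hρ]; nlinarith [mul_nonneg (sq_nonneg s) (sub_nonneg.2 hs.le)]
  -- Young's inequality `2 (s t) β ≤ ρ (s t)² + β² / ρ`, multiplied through by `ρ`
  have hyoung : ρ * (s * t + β) ^ 2 ≤ ρ * (1 + ρ) * (s * t) ^ 2 + (1 + ρ) * β ^ 2 := by
    nlinarith [sq_nonneg (ρ * (s * t) - β)]
  rw [← mul_le_mul_iff_of_pos_left hρ0, mul_add, mul_div_cancel₀ _ hρ0.ne']
  nlinarith [mul_le_mul_of_nonneg_left hcoef (mul_nonneg hρ0.le (sq_nonneg t))]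

theorem differentiable_affMap (d : ℕ) (A : Matrix (Fin d) (Fin d) ℂ) (b : Fin d → ℂ) :
    Differentiable ℂ (affMap d A b) :=
  (LinearMap.toContinuousLinearMap (Matrix.mulVecLin A)).differentiable.add_const b

theorem exists_affMap_eq_self {d : ℕ} {A : Matrix (Fin d) (Fin d) ℂ} (b : Fin d → ℂ) {s : ℝ}
    (hs1 : s < 1) (hA : ∀ v, eNorm d (A.mulVec v) ≤ s * eNorm d v) :
    ∃ z, affMap d A b z = z := by
  have hinj : Function.Injective (1 - A).mulVecLin := by
    rw [← LinearMap.ker_eq_bot, LinearMap.ker_eq_bot']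
    intro v hv
    have hAv : A.mulVec v = v := by
      rw [Matrix.mulVecLin_apply, Matrix.sub_mulVec, Matrix.one_mulVec, sub_eq_zero] at hv
      exact hv.symm
    have := hA v
    rw [hAv] at this
    exact eNorm_eq_zero.1 (by nlinarith [eNorm_nonneg d v])
  obtain ⟨z, hz⟩ := LinearMap.injective_iff_surjective.1 hinj b
  refine ⟨z, ?_⟩
  rw [Matrix.mulVecLin_apply, Matrix.sub_mulVec, Matrix.one_mulVec] at hz
  rw [affMap, ← hz]
  abel

theorem exists_ne_zero_mul_add_mul_eq_zero {R : Type*} [CommRing R] [Nontrivial R] (x y : R) :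
    ∃ a b : R, ¬(a = 0 ∧ b = 0) ∧ a * x + b * y = 0 := by
  by_cases hx : x = 0
  · exact ⟨1, 0, by simp, by simp [hx]⟩
  · exact ⟨y, -x, by simp [hx], by ring⟩

section Contraction

variable {d : ℕ} {A : Matrix (Fin d) (Fin d) ℂ} {b : Fin d → ℂ} {s : ℝ}

theorem MemFock.comp_affMap (hs0 : 0 ≤ s) (hs1 : s < 1) (hA : ∀ v, eNorm d (A.mulVec v) ≤ s * eNorm d v)
    {f : (Fin d → ℂ) → ℂ} (hf : MemFock d f) : MemFock d (f ∘ affMap d A b) := by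
  obtain ⟨ρ, hρ, M, hM⟩ := exists_mul_sq_add_le (s := s) (by nlinarith) (eNorm d b)
  set I := ∫ z, fockIntegrand d f z
  set C := ((π * ρ ^ 2) ^ d)⁻¹ * I * exp ((M + d * (ρ + ρ ^ 2)) / 2)
  have hbound : ∀ z, fockIntegrand d (f ∘ affMap d A b) z ≤ C * exp (-(ρ / 2) * eNormSq d z) := by
    intro z
    have hφ : eNormSq d (affMap d A b z) ≤ (s * eNorm d z + eNorm d b) ^ 2 := by
      rw [← eNorm_sq]
      gcongr
      · exact eNorm_nonneg d _
      · exact (eNorm_add_le d _ _).trans (by linarith [hA z])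
    have hexp : ((1 + ρ) * eNormSq d (affMap d A b z) + d * (ρ + ρ ^ 2)) / 2 - eNormSq d z / 2
        ≤ (M + d * (ρ + ρ ^ 2)) / 2 - ρ / 2 * eNormSq d z := by
      have := hM (eNorm d z)
      rw [eNorm_sq] at this
      nlinarith
    have hI : 0 ≤ I := integral_nonneg (fockIntegrand_nonneg d f)
    calc fockIntegrand d (f ∘ affMap d A b) z
        = ‖f (affMap d A b z)‖ ^ 2 * exp (-eNormSq d z / 2) := rfl
      _ ≤ ((π * ρ ^ 2) ^ d)⁻¹ * exp (((1 + ρ) * eNormSq d (affMap d A b z) +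
            d * (ρ + ρ ^ 2)) / 2) * I * exp (-eNormSq d z / 2) :=
          mul_le_mul_of_nonneg_right (norm_sq_le_integral_fockIntegrand hf hρ _) (exp_pos _).le
      _ = ((π * ρ ^ 2) ^ d)⁻¹ * I * exp (((1 + ρ) * eNormSq d (affMap d A b z) +
            d * (ρ + ρ ^ 2)) / 2 - eNormSq d z / 2) := by
          rw [sub_eq_add_neg, exp_add, neg_div]; ring
      _ ≤ ((π * ρ ^ 2) ^ d)⁻¹ * I * exp ((M + d * (ρ + ρ ^ 2)) / 2 - ρ / 2 * eNormSq d z) := by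
          gcongr
      _ = C * exp (-(ρ / 2) * eNormSq d z) := by
          rw [sub_eq_add_neg, exp_add, neg_mul]; ring
  refine ⟨hf.1.comp (differentiable_affMap d A b), ?_⟩
  refine ((integrable_exp_neg_mul_eNormSq d (half_pos hρ)).const_mul C).mono'
    (hf.1.comp (differentiable_affMap d A b)).continuous.fockIntegrand.aestronglyMeasurable
    (Filter.Eventually.of_forall fun z => ?_)
  rw [Real.norm_of_nonneg (fockIntegrand_nonneg d _ z)]
  exact hbound z

theorem MemFock.comp_iterate_affMap (hs0 : 0 ≤ s) (hs1 : s < 1) (hA : ∀ v, eNorm d (A.mulVec v) ≤ s * eNorm d v)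
    {f : (Fin d → ℂ) → ℂ} (hf : MemFock d f) (n : ℕ) : MemFock d (f ∘ (affMap d A b)^[n]) := by
  induction n with
  | zero => exact hf
  | succ n ih => exact ih.comp_affMap hs0 hs1 hA

theorem not_isCyclicVector_of_apply_eq_zero (hs0 : 0 ≤ s) (hs1 : s < 1)
    (hA : ∀ v, eNorm d (A.mulVec v) ≤ s * eNorm d v) {z₀ : Fin d → ℂ}
    (hz₀ : affMap d A b z₀ = z₀) {h : (Fin d → ℂ) → ℂ} (hh : h z₀ = 0) :
    ¬IsCyclicVector d A b h := by
  rintro ⟨hmem, hcyc⟩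
  obtain ⟨C, hC, hev⟩ := exists_norm_le_mul_fockNorm d z₀
  obtain ⟨m, c, hlt⟩ := hcyc _ (memFock_const d 1) C⁻¹ (inv_pos.2 hC)
  set G := fun z => 1 - ∑ n ∈ Finset.range (m + 1), c n * h ((affMap d A b)^[n] z)
  have hG : MemFock d G := by
    have hG' : G = (fun _ => 1) -
        ∑ n ∈ Finset.range (m + 1), c n • (h ∘ (affMap d A b)^[n]) := by
      ext z
      simp [G, Finset.sum_apply]
    rw [← mem_fockSpace, hG']
    exact sub_mem (memFock_const d 1) (Submodule.sum_mem _ fun n _ =>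
      Submodule.smul_mem _ _ (hmem.comp_iterate_affMap hs0 hs1 hA n))
  have hG₀ : G z₀ = 1 := by simp [G, Function.iterate_fixed hz₀, hh]
  have := hev G hG
  rw [hG₀, norm_one] at this
  have := mul_lt_mul_of_pos_left hlt hC
  rw [mul_inv_cancel₀ hC.ne'] at this
  linarith

end Contraction

theorem cyclic_vectors_no_two_dim_subspace_general
    (d : ℕ) (A : Matrix (Fin d) (Fin d) ℂ) (b : Fin d → ℂ)
    (hop : ∃ r : ℝ, r < 1 ∧ ∀ v, eNorm d (A.mulVec v) ≤ r * eNorm d v) :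
    ∀ f g : (Fin d → ℂ) → ℂ, MemFock d f → MemFock d g →
      LinearIndependent ℂ ![f, g] →
      ∃ a b' : ℂ, ¬(a = 0 ∧ b' = 0) ∧
        ¬ IsCyclicVector d A b (fun z => a * f z + b' * g z) := by
  intro f g _ _ _
  obtain ⟨r, hr, hA⟩ := hop
  have hA' : ∀ v, eNorm d (A.mulVec v) ≤ max r 0 * eNorm d v := fun v =>
    (hA v).trans (mul_le_mul_of_nonneg_right (le_max_left r 0) (eNorm_nonneg d v))
  obtain ⟨z₀, hz₀⟩ := exists_affMap_eq_self b hr hA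
  obtain ⟨a, b', hab, hzero⟩ := exists_ne_zero_mul_add_mul_eq_zero (f z₀) (g z₀)
  exact ⟨a, b', hab, not_isCyclicVector_of_apply_eq_zero (le_max_right r 0)
    (max_lt hr one_pos) hA' hz₀ hzero⟩

/-- The set of cyclic vectors of a compact cyclic composition operator, together with 0,
contains no two-dimensional subspace. -/
theorem cyclic_vectors_no_two_dim_subspace
    (d : ℕ) (hd : 1 ≤ d) (A : Matrix (Fin d) (Fin d) ℂ) (b : Fin d → ℂ)
    (hop : ∃ r : ℝ, r < 1 ∧ ∀ v, eNorm d (A.mulVec v) ≤ r * eNorm d v)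
    (hcyc : IsCyclicOp d A b) :
    ∀ f g : (Fin d → ℂ) → ℂ, MemFock d f → MemFock d g →
      LinearIndependent ℂ ![f, g] →
      ∃ a b' : ℂ, ¬(a = 0 ∧ b' = 0) ∧
        ¬ IsCyclicVector d A b (fun z => a * f z + b' * g z) :=
  cyclic_vectors_no_two_dim_subspace_general d A b hop
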